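/- Let s < 0 and ε > 0. Then there exists a constant C > 0 (depending only on s and ε) such that for all sequences a, b : ℤ → ℂ, the sequence II(k) := Σ_{k'∈ℤ, 0 < |k'| < |k|/2} (⟨k⟩^s − ⟨k'⟩^s) · (i k') · a(k−k') · b(k') satisfies ‖II‖_{ℓ²} ≤ C ‖a‖_{ℓ²_{3/2+ε}} ‖b‖_{ℓ²}. -/

import Mathlib

open scoped ENNReal
open MeasureTheory

/-- Japanese bracket `⟨k⟩ = (1 + k²)^(1/2)` for an integer `k`. -/
noncomputable def jb (k : ℤ) : ℝ := Real.sqrt (1 + (k : ℝ) ^ 2)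

/-- Weighted `ℓ²_s` norm of a sequence `a : ℤ → ℂ`, valued in `[0,∞]`. -/
noncomputable def l2 (s : ℝ) (a : ℤ → ℂ) : ℝ≥0∞ :=
  (∑' k : ℤ, ENNReal.ofReal (jb k ^ (2 * s) * ‖a k‖ ^ 2)) ^ (1 / 2 : ℝ)

/-- Cauchy–Schwarz for `ℝ≥0∞`-valued tsums over `ℤ`. -/
lemma cs_tsum (f g : ℤ → ℝ≥0∞) :
    ∑' k : ℤ, f k * g k ≤
      (∑' k : ℤ, f k ^ (2 : ℝ)) ^ (1 / 2 : ℝ) * (∑' k : ℤ, g k ^ (2 : ℝ)) ^ (1 / 2 : ℝ) := by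
  have hpq : (2 : ℝ).HolderConjugate 2 := Real.HolderConjugate.two_two
  have h := ENNReal.lintegral_mul_le_Lp_mul_Lq (Measure.count : Measure ℤ) hpq
    (Measurable.of_discrete (f := f)).aemeasurable
    (Measurable.of_discrete (f := g)).aemeasurable
  simpa [MeasureTheory.lintegral_count, Pi.mul_apply] using h

/-- Young's inequality `‖A ⋆ B‖_{ℓ²} ≤ ‖A‖_{ℓ¹} ‖B‖_{ℓ²}` for `ℝ≥0∞`-valued sequences. -/
lemma young_conv (A B : ℤ → ℝ≥0∞) :
    (∑' k : ℤ, (∑' j : ℤ, A (k - j) * B j) ^ (2 : ℝ)) ^ (1 / 2 : ℝ) ≤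
      (∑' m : ℤ, A m) * (∑' k : ℤ, B k ^ (2 : ℝ)) ^ (1 / 2 : ℝ) := by
  set SA := ∑' m : ℤ, A m with hSA
  have half_half : ∀ x : ℝ≥0∞, x ^ (1/2 : ℝ) * x ^ (1/2 : ℝ) = x := by
    intro x
    rw [← ENNReal.rpow_add_of_nonneg _ _ (by norm_num) (by norm_num)]
    norm_num
  have hshift : ∀ j : ℤ, ∑' k : ℤ, A (k - j) = SA := by
    intro j
    exact (Equiv.subRight j).tsum_eq A
  have hshift' : ∀ k : ℤ, ∑' j : ℤ, A (k - j) = SA := by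
    intro k
    exact (Equiv.subLeft k).tsum_eq A
  have key : ∀ k : ℤ, (∑' j : ℤ, A (k - j) * B j) ^ (2 : ℝ) ≤
      SA * ∑' j : ℤ, A (k - j) * B j ^ (2 : ℝ) := by
    intro k
    have h1 : ∑' j : ℤ, A (k - j) * B j
        = ∑' j : ℤ, (A (k - j)) ^ (1/2 : ℝ) * ((A (k - j)) ^ (1/2 : ℝ) * B j) := by
      refine tsum_congr fun j => ?_
      rw [← mul_assoc, half_half]
    have h2 := cs_tsum (fun j => (A (k - j)) ^ (1/2 : ℝ))
      (fun j => (A (k - j)) ^ (1/2 : ℝ) * B j)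
    have e1 : ∀ j : ℤ, ((A (k - j)) ^ (1/2 : ℝ)) ^ (2 : ℝ) = A (k - j) := by
      intro j
      rw [← ENNReal.rpow_mul]
      norm_num
    have e2 : ∀ j : ℤ, ((A (k - j)) ^ (1/2 : ℝ) * B j) ^ (2 : ℝ)
        = A (k - j) * B j ^ (2 : ℝ) := by
      intro j
      rw [ENNReal.mul_rpow_of_nonneg _ _ (by norm_num : (0:ℝ) ≤ 2), e1]
    rw [h1]
    calc (∑' j : ℤ, (A (k - j)) ^ (1/2 : ℝ) * ((A (k - j)) ^ (1/2 : ℝ) * B j)) ^ (2 : ℝ)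
        ≤ ((∑' j : ℤ, ((A (k - j)) ^ (1/2 : ℝ)) ^ (2:ℝ)) ^ (1/2 : ℝ) *
            (∑' j : ℤ, ((A (k - j)) ^ (1/2 : ℝ) * B j) ^ (2:ℝ)) ^ (1/2 : ℝ)) ^ (2 : ℝ) := by
          exact ENNReal.rpow_le_rpow h2 (by norm_num)
      _ = SA * ∑' j : ℤ, A (k - j) * B j ^ (2 : ℝ) := by
          rw [tsum_congr e1, tsum_congr e2, hshift' k,
            ENNReal.mul_rpow_of_nonneg _ _ (by norm_num : (0:ℝ) ≤ 2),
            ← ENNReal.rpow_mul, ← ENNReal.rpow_mul]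
          norm_num
  calc (∑' k : ℤ, (∑' j : ℤ, A (k - j) * B j) ^ (2 : ℝ)) ^ (1 / 2 : ℝ)
      ≤ (∑' k : ℤ, SA * ∑' j : ℤ, A (k - j) * B j ^ (2 : ℝ)) ^ (1 / 2 : ℝ) :=
        ENNReal.rpow_le_rpow (ENNReal.tsum_le_tsum key) (by norm_num)
    _ = (SA * (SA * ∑' j : ℤ, B j ^ (2 : ℝ))) ^ (1 / 2 : ℝ) := by
        rw [ENNReal.tsum_mul_left]
        congr 2
        rw [ENNReal.tsum_comm]
        calc ∑' j : ℤ, ∑' k : ℤ, A (k - j) * B j ^ (2 : ℝ)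
            = ∑' j : ℤ, (∑' k : ℤ, A (k - j)) * B j ^ (2 : ℝ) := by
              refine tsum_congr fun j => ?_
              rw [ENNReal.tsum_mul_right]
          _ = ∑' j : ℤ, SA * B j ^ (2 : ℝ) := by
              refine tsum_congr fun j => ?_
              rw [hshift j]
          _ = SA * ∑' j : ℤ, B j ^ (2 : ℝ) := ENNReal.tsum_mul_left
    _ = SA * (∑' k : ℤ, B k ^ (2 : ℝ)) ^ (1 / 2 : ℝ) := by
        rw [← mul_assoc, ENNReal.mul_rpow_of_nonneg _ _ (by norm_num : (0:ℝ) ≤ 1/2),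
          ENNReal.mul_rpow_of_nonneg SA SA (by norm_num : (0:ℝ) ≤ 1/2), half_half SA]

lemma ofReal_norm_tsum_le {ι : Type*} (c : ι → ℂ) :
    ENNReal.ofReal ‖∑' i, c i‖ ≤ ∑' i, ENNReal.ofReal ‖c i‖ := by
  by_cases h : Summable fun i => ‖c i‖
  · calc ENNReal.ofReal ‖∑' i, c i‖ ≤ ENNReal.ofReal (∑' i, ‖c i‖) :=
          ENNReal.ofReal_le_ofReal (norm_tsum_le_tsum_norm h)
      _ = ∑' i, ENNReal.ofReal ‖c i‖ :=
          ENNReal.ofReal_tsum_of_nonneg (fun i => norm_nonneg _) h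
  · have htop : (∑' i, ENNReal.ofReal ‖c i‖) = ⊤ := by
      by_contra hne
      apply h
      have : Summable fun i => ‖c i‖₊ := by
        apply ENNReal.tsum_coe_ne_top_iff_summable.mp
        simp only [← enorm_eq_nnnorm, ofReal_norm] at hne ⊢
        exact hne
      exact NNReal.summable_coe.mpr this |>.congr fun i => coe_nnnorm _
    rw [htop]
    exact le_top

lemma jb_pos (k : ℤ) : 0 < jb k := Real.sqrt_pos.mpr (by positivity)

lemma one_le_jb (k : ℤ) : 1 ≤ jb k := by
  have := Real.sqrt_le_sqrt (show (1:ℝ) ≤ 1 + (k:ℝ)^2 by nlinarith [sq_nonneg ((k:ℝ))])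
  simpa [jb] using this

lemma abs_le_jb (k : ℤ) : |(k : ℝ)| ≤ jb k := by
  rw [jb, ← Real.sqrt_sq_eq_abs]
  exact Real.sqrt_le_sqrt (by linarith)

lemma jb_zero : jb 0 = 1 := by simp [jb]

lemma jb_summable {q : ℝ} (hq : 1 < q) : Summable fun m : ℤ => jb m ^ (-q) := by
  have h1 : Summable fun m : ℤ => |(m : ℝ)| ^ (-q) := Real.summable_abs_int_rpow hq
  have h2 : Summable fun m : ℤ => (if m = 0 then (1:ℝ) else 0) := by
    apply summable_of_ne_finset_zero (s := ({0} : Finset ℤ))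
    intro m hm
    simp only [Finset.mem_singleton] at hm
    simp [hm]
  apply Summable.of_nonneg_of_le (fun m => Real.rpow_nonneg (jb_pos m).le _) _ (h1.add h2)
  intro m
  by_cases hm : m = 0
  · subst hm
    simp [jb_zero, Real.zero_rpow (show -q ≠ 0 by intro h; rw [neg_eq_zero] at h; linarith)]
  · have h1m : (1:ℝ) ≤ |(m:ℝ)| := by
      rw [← Int.cast_abs]
      exact_mod_cast Int.one_le_abs (by simpa using hm)
    have : jb m ^ (-q) ≤ |(m:ℝ)| ^ (-q) :=
      Real.rpow_le_rpow_of_nonpos (by linarith) (abs_le_jb m) (by linarith)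
    simp only [hm, if_false, add_zero]
    exact this

lemma sumA_bound (ε : ℝ) (hε : 0 < ε) :
    ∃ C : ℝ, 0 < C ∧ ∀ a : ℤ → ℂ,
      ∑' m : ℤ, ENNReal.ofReal (jb m * ‖a m‖) ≤
        ENNReal.ofReal C *
          (∑' m : ℤ, ENNReal.ofReal (jb m ^ (2*(3/2+ε)) * ‖a m‖^2)) ^ (1/2 : ℝ) := by
  have hsum : Summable fun m : ℤ => jb m ^ (-(1+2*ε)) := jb_summable (by linarith)
  set T := ∑' m : ℤ, jb m ^ (-(1+2*ε)) with hT
  have hT0 : 0 ≤ T := tsum_nonneg fun m => Real.rpow_nonneg (jb_pos m).le _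
  refine ⟨T ^ (1/2:ℝ) + 1, by positivity, fun a => ?_⟩
  set w : ℤ → ℝ≥0∞ := fun m => ENNReal.ofReal (jb m ^ (-(1/2+ε))) with hw
  set g : ℤ → ℝ≥0∞ := fun m => ENNReal.ofReal (jb m ^ (3/2+ε) * ‖a m‖) with hg
  have hsplit : ∀ m, ENNReal.ofReal (jb m * ‖a m‖) = w m * g m := by
    intro m
    rw [hw, hg, ← ENNReal.ofReal_mul (Real.rpow_nonneg (jb_pos m).le _)]
    congr 1
    rw [← mul_assoc, ← Real.rpow_add (jb_pos m),
      show -(1/2+ε) + (3/2+ε) = (1:ℝ) by ring, Real.rpow_one]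
  have hw2 : ∑' m : ℤ, w m ^ (2:ℝ) = ENNReal.ofReal T := by
    rw [hT, ENNReal.ofReal_tsum_of_nonneg (fun m => Real.rpow_nonneg (jb_pos m).le _) hsum]
    refine tsum_congr fun m => ?_
    rw [hw, ENNReal.ofReal_rpow_of_nonneg (Real.rpow_nonneg (jb_pos m).le _) (by norm_num)]
    congr 1
    rw [← Real.rpow_mul (jb_pos m).le]
    congr 1
    ring
  have hg2 : ∀ m, g m ^ (2:ℝ) = ENNReal.ofReal (jb m ^ (2*(3/2+ε)) * ‖a m‖^2) := by
    intro m
    rw [hg, ENNReal.ofReal_rpow_of_nonneg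
      (mul_nonneg (Real.rpow_nonneg (jb_pos m).le _) (norm_nonneg _)) (by norm_num)]
    congr 1
    rw [Real.mul_rpow (Real.rpow_nonneg (jb_pos m).le _) (norm_nonneg _),
      ← Real.rpow_mul (jb_pos m).le,
      show ((3:ℝ)/2+ε) * 2 = 2*(3/2+ε) by ring,
      show ‖a m‖ ^ (2:ℝ) = ‖a m‖ ^ (2:ℕ) by
        rw [← Real.rpow_natCast ‖a m‖ 2]; norm_num]
  calc ∑' m : ℤ, ENNReal.ofReal (jb m * ‖a m‖) = ∑' m : ℤ, w m * g m := tsum_congr hsplit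
    _ ≤ (∑' m : ℤ, w m ^ (2:ℝ)) ^ (1/2 : ℝ) * (∑' m : ℤ, g m ^ (2:ℝ)) ^ (1/2 : ℝ) :=
        cs_tsum w g
    _ ≤ ENNReal.ofReal (T ^ (1/2:ℝ) + 1) *
          (∑' m : ℤ, ENNReal.ofReal (jb m ^ (2*(3/2+ε)) * ‖a m‖^2)) ^ (1/2 : ℝ) := by
        rw [tsum_congr hg2]
        gcongr
        rw [hw2, ENNReal.ofReal_rpow_of_nonneg hT0 (by norm_num)]
        exact ENNReal.ofReal_le_ofReal (by linarith)

lemma term_bound {s : ℝ} (hs : s < 0) (a b : ℤ → ℂ) (k m : ℤ)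
    (hmk : 2 * |m| < |k|) :
    ENNReal.ofReal ‖Complex.ofReal (jb k ^ s - jb m ^ s) * (Complex.I * (m : ℂ)) *
        a (k - m) * b m‖ ≤
      ENNReal.ofReal (jb (k - m) * ‖a (k - m)‖) * ENNReal.ofReal ‖b m‖ := by
  rw [← ENNReal.ofReal_mul (mul_nonneg (jb_pos _).le (norm_nonneg _))]
  apply ENNReal.ofReal_le_ofReal
  have hnorm : ‖Complex.ofReal (jb k ^ s - jb m ^ s) * (Complex.I * (m : ℂ)) *
      a (k - m) * b m‖ = |jb k ^ s - jb m ^ s| * |(m : ℝ)| * ‖a (k - m)‖ * ‖b m‖ := by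
    simp [norm_mul, map_mul, ← Complex.ofReal_sub, Complex.norm_real, Real.norm_eq_abs,
      Complex.norm_I, Complex.norm_intCast, mul_assoc]
  rw [hnorm]
  have hx1 : jb k ^ s ≤ 1 := Real.rpow_le_one_of_one_le_of_nonpos (one_le_jb k) hs.le
  have hx2 : jb m ^ s ≤ 1 := Real.rpow_le_one_of_one_le_of_nonpos (one_le_jb m) hs.le
  have hx1' : 0 < jb k ^ s := Real.rpow_pos_of_pos (jb_pos k) s
  have hx2' : 0 < jb m ^ s := Real.rpow_pos_of_pos (jb_pos m) s
  have h1 : |jb k ^ s - jb m ^ s| ≤ 1 := by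
    rw [abs_sub_le_iff]
    constructor <;> linarith
  have h2 : |(m : ℝ)| ≤ jb (k - m) := by
    have hint : |m| ≤ |k - m| := by
      have := abs_sub_abs_le_abs_sub k m
      linarith
    calc |(m : ℝ)| = ((|m| : ℤ) : ℝ) := by rw [Int.cast_abs]
      _ ≤ ((|k - m| : ℤ) : ℝ) := by exact_mod_cast hint
      _ = |((k - m : ℤ) : ℝ)| := by rw [Int.cast_abs]
      _ ≤ jb (k - m) := abs_le_jb _
  have h3 : |jb k ^ s - jb m ^ s| * |(m : ℝ)| ≤ jb (k - m) := by
    calc |jb k ^ s - jb m ^ s| * |(m : ℝ)| ≤ 1 * jb (k - m) :=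
          mul_le_mul h1 h2 (abs_nonneg _) zero_le_one
      _ = jb (k - m) := one_mul _
  exact mul_le_mul_of_nonneg_right
    (mul_le_mul_of_nonneg_right h3 (norm_nonneg _)) (norm_nonneg _)

/-- Low-inner-frequency piece (region `0 < |k'| < |k|/2`) of the commutator, negative
regularity `s < 0`: `‖II‖_{ℓ²} ≤ C ‖a‖_{ℓ²_{3/2+ε}} ‖b‖_{ℓ²}`. -/
theorem commutator_low_piece_neg (s ε : ℝ) (hs : s < 0) (hε : 0 < ε) :
    ∃ C : ℝ, 0 < C ∧ ∀ a b : ℤ → ℂ,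
      l2 0 (fun k => ∑' k' : {m : ℤ // m ≠ 0 ∧ 2 * |m| < |k|},
          Complex.ofReal (jb k ^ s - jb k'.1 ^ s) * (Complex.I * (k'.1 : ℂ)) *
            a (k - k'.1) * b k'.1)
        ≤ ENNReal.ofReal C * (l2 (3 / 2 + ε) a * l2 0 b) := by
  obtain ⟨C, hC, hCa⟩ := sumA_bound ε hε
  refine ⟨C, hC, fun a b => ?_⟩
  set A : ℤ → ℝ≥0∞ := fun m => ENNReal.ofReal (jb m * ‖a m‖) with hA
  set B : ℤ → ℝ≥0∞ := fun j => ENNReal.ofReal ‖b j‖ with hB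
  set II : ℤ → ℂ := fun k => ∑' k' : {m : ℤ // m ≠ 0 ∧ 2 * |m| < |k|},
      Complex.ofReal (jb k ^ s - jb k'.1 ^ s) * (Complex.I * (k'.1 : ℂ)) *
        a (k - k'.1) * b k'.1 with hII
  have step1 : ∀ k : ℤ, ENNReal.ofReal ‖II k‖ ≤ ∑' j : ℤ, A (k - j) * B j := by
    intro k
    calc ENNReal.ofReal ‖II k‖
        ≤ ∑' k' : {m : ℤ // m ≠ 0 ∧ 2 * |m| < |k|},
            ENNReal.ofReal ‖Complex.ofReal (jb k ^ s - jb k'.1 ^ s) * (Complex.I * (k'.1 : ℂ)) *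
              a (k - k'.1) * b k'.1‖ := ofReal_norm_tsum_le _
      _ ≤ ∑' k' : {m : ℤ // m ≠ 0 ∧ 2 * |m| < |k|}, A (k - k'.1) * B k'.1 :=
            ENNReal.tsum_le_tsum fun k' => term_bound hs a b k k'.1 k'.2.2
      _ ≤ ∑' j : ℤ, A (k - j) * B j :=
            ENNReal.tsum_comp_le_tsum_of_injective Subtype.val_injective
              (fun j => A (k - j) * B j)
  have step2 : l2 0 II ≤ (∑' k : ℤ, (∑' j : ℤ, A (k - j) * B j) ^ (2:ℝ)) ^ (1/2 : ℝ) := by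
    rw [l2]
    apply ENNReal.rpow_le_rpow _ (by norm_num)
    apply ENNReal.tsum_le_tsum
    intro k
    have he : ENNReal.ofReal (jb k ^ (2 * (0:ℝ)) * ‖II k‖ ^ 2)
        = (ENNReal.ofReal ‖II k‖) ^ (2:ℝ) := by
      rw [mul_zero, Real.rpow_zero, one_mul,
        show ((2:ℝ)) = ((2:ℕ):ℝ) by norm_num, ENNReal.rpow_natCast,
        ← ENNReal.ofReal_pow (norm_nonneg _)]
    rw [he]
    exact ENNReal.rpow_le_rpow (step1 k) (by norm_num)
  have step3 : (∑' k : ℤ, B k ^ (2:ℝ)) ^ (1/2 : ℝ) = l2 0 b := by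
    rw [l2]
    congr 1
    refine tsum_congr fun k => ?_
    rw [hB, mul_zero, Real.rpow_zero, one_mul,
      show ((2:ℝ)) = ((2:ℕ):ℝ) by norm_num, ENNReal.rpow_natCast,
      ← ENNReal.ofReal_pow (norm_nonneg _)]
  have step4 : ∑' m : ℤ, A m ≤ ENNReal.ofReal C * l2 (3/2+ε) a := by
    rw [l2]
    exact hCa a
  calc l2 0 II ≤ (∑' k : ℤ, (∑' j : ℤ, A (k - j) * B j) ^ (2:ℝ)) ^ (1/2 : ℝ) := step2
    _ ≤ (∑' m : ℤ, A m) * (∑' k : ℤ, B k ^ (2:ℝ)) ^ (1/2 : ℝ) := young_conv A B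
    _ = (∑' m : ℤ, A m) * l2 0 b := by rw [step3]
    _ ≤ ENNReal.ofReal C * l2 (3/2+ε) a * l2 0 b := mul_le_mul_left step4 _
    _ = ENNReal.ofReal C * (l2 (3/2+ε) a * l2 0 b) := mul_assoc _ _ _
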